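/- Let k ≥ 3 be odd and F = (θ₁,...,θ_d) a k-restricted minwise independent family of permutations of {1,...,n}. Let σ be the order-reversing permutation i ↦ n+1−i. Then the family of 2d permutations (θ_m and σ∘θ_m for all m) is (k+1)-restricted minwise independent. -/

import Mathlib

/-!
Under `σ ∘ θ_m` the point `x` is the minimum of `X` exactly when it is the maximum of `X` under
`θ_m`, so the doubled family counts `#min(X, x) + #max(X, x)`. By inclusion–exclusion `#max(X, x)`
is an alternating sum of the `#min(Y, x)` over `x ∈ Y ⊆ X`. For `|Y| ≤ k` these are `d / |Y|`, and
`∑ₛ (-1)ˢ C(r, s) / (s + 1) = 1 / (r + 1)` turns the sum over the proper `Y` into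
`(#max + (-1)^|X| #min) |X| = d (1 + (-1)^|X|)`. For `|X| ≤ k` we also know `#min |X| = d`, hence
`#max |X| = d`; for `|X| = k + 1`, which is even because `k` is odd, the identity is already
`(#max + #min) |X| = 2d`.
-/

open Finset Function

theorem sum_range_neg_one_pow_mul_choose_div (r : ℕ) :
    ∑ s ∈ range (r + 1), (-1 : ℚ) ^ s * r.choose s / (s + 1) = 1 / (r + 1) := by
  have h := Int.alternating_sum_range_choose_of_ne (Nat.succ_ne_zero r)
  rw [sum_range_succ'] at h
  have halt : ∑ s ∈ range (r + 1), (-1 : ℚ) ^ s * (r + 1).choose (s + 1) = 1 := by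
    have := congrArg (Int.cast : ℤ → ℚ) h
    simp only [Nat.succ_eq_add_one, pow_succ, Nat.choose_zero_right] at this
    push_cast at this
    simp only [mul_neg_one, neg_mul, sum_neg_distrib] at this
    linarith
  rw [eq_div_iff (by positivity), sum_mul]
  refine (sum_congr rfl fun s _ => ?_).trans halt
  have hchoose : ((r : ℚ) + 1) * r.choose s = (r + 1).choose (s + 1) * (s + 1) := by
    exact_mod_cast Nat.add_one_mul_choose_eq r s
  rw [div_mul_eq_mul_div, div_eq_iff (by positivity)]
  linear_combination (-1 : ℚ) ^ s * hchoose

theorem sum_powerset_neg_one_pow_card_div {α : Type*} (s : Finset α) :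
    ∑ t ∈ s.powerset, (-1 : ℚ) ^ #t / (#t + 1) = 1 / (#s + 1) := by
  rw [sum_powerset_apply_card (fun m => (-1 : ℚ) ^ m / (m + 1)),
    ← sum_range_neg_one_pow_mul_choose_div]
  refine sum_congr rfl fun m _ => ?_
  rw [nsmul_eq_mul]
  ring

section

variable {ι α β : Type*} [Fintype ι] [LinearOrder β]

def minCount (θ : ι → α → β) (X : Finset α) (x : α) : ℕ := #{i | ∀ y ∈ X, θ i x ≤ θ i y}

def maxCount (θ : ι → α → β) (X : Finset α) (x : α) : ℕ := #{i | ∀ y ∈ X, θ i y ≤ θ i x}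

theorem minCount_sum {κ : Type*} [Fintype κ] (θ : ι ⊕ κ → α → β) (X : Finset α) (x : α) :
    minCount θ X x = minCount (θ ∘ Sum.inl) X x + minCount (θ ∘ Sum.inr) X x := by
  unfold minCount
  rw [← card_disjSum]
  congr 1
  ext (i | i) <;> simp

theorem minCount_comp_strictAnti {γ : Type*} [LinearOrder γ] {φ : β → γ} (hφ : StrictAnti φ)
    (θ : ι → α → β) (X : Finset α) (x : α) :
    minCount (fun i => φ ∘ θ i) X x = maxCount θ X x := by
  simp only [minCount, maxCount, comp_apply, hφ.le_iff_ge]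

theorem maxCount_eq_sum_powerset [DecidableEq α] {θ : ι → α → β} (hθ : ∀ i, Injective (θ i))
    {X : Finset α} {x : α} (hx : x ∈ X) :
    (maxCount θ X x : ℤ) =
      ∑ t ∈ (X.erase x).powerset, (-1) ^ #t * (minCount θ (insert x t) x : ℤ) := by
  classical
  convert inclusion_exclusion_card_inf_compl (X.erase x) (fun y => {i | θ i x ≤ θ i y})
    using 3 with t
  · unfold maxCount
    congr 1
    ext i
    simp only [mem_filter, mem_univ, true_and, mem_inf, mem_compl, not_le]
    conv_lhs => rw [← insert_erase hx]
    simp only [forall_mem_insert, le_refl, true_and]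
    exact forall₂_congr fun y hy => ((hθ i).ne (ne_of_mem_erase hy)).le_iff_lt
  · unfold minCount
    congr 2
    ext i
    simp [mem_inf]

theorem maxCount_add_neg_one_pow_mul_minCount [DecidableEq α] {θ : ι → α → β}
    (hθ : ∀ i, Injective (θ i)) {X : Finset α} {x : α} (hx : x ∈ X) {d : ℕ}
    (hsmall : ∀ Y ⊆ X, x ∈ Y → #Y < #X → minCount θ Y x * #Y = d) :
    ((maxCount θ X x : ℚ) + (-1) ^ #X * minCount θ X x) * #X = d * (1 + (-1) ^ #X) := by
  set E := X.erase x
  have hXE : insert x E = X := insert_erase hx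
  have hcard : #X = #E + 1 := (card_erase_add_one hx).symm
  have hxE : x ∉ E := notMem_erase x X
  have hproper : ∀ t ∈ E.powerset.erase E,
      (-1 : ℚ) ^ #t * minCount θ (insert x t) x = d * ((-1) ^ #t / (#t + 1)) := by
    intro t ht
    obtain ⟨htE, ht⟩ := mem_erase.mp ht
    have htsub := mem_powerset.mp ht
    have hxt : x ∉ t := fun h => hxE (htsub h)
    have hlt : #t < #E := card_lt_card (htsub.ssubset_of_ne htE)
    have hY := hsmall (insert x t) (hXE ▸ insert_subset_insert x htsub) (mem_insert_self x t)
      (by rw [card_insert_of_notMem hxt]; omega)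
    rw [card_insert_of_notMem hxt] at hY
    have hY' : (minCount θ (insert x t) x : ℚ) = d / (#t + 1) := by
      rw [eq_div_iff (by positivity)]
      exact_mod_cast hY
    rw [hY']
    ring
  have hmax := congrArg (Int.cast : ℤ → ℚ) (maxCount_eq_sum_powerset hθ hx)
  push_cast at hmax
  rw [← add_sum_erase _ _ (mem_powerset_self E), sum_congr rfl hproper, ← mul_sum,
    sum_erase_eq_sub (mem_powerset_self E), sum_powerset_neg_one_pow_card_div, hXE] at hmax
  rw [hmax, hcard]
  push_cast
  field_simp
  ring

end

theorem stmt_9_general (n k d : ℕ) (hodd : Odd k)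
    (θ : Fin d → Equiv.Perm (Fin n))
    (hmin : ∀ j, 1 ≤ j → j ≤ k → ∀ X : Finset (Fin n), X.card = j → ∀ x ∈ X,
      (Finset.univ.filter fun i : Fin d => ∀ y ∈ X, θ i x ≤ θ i y).card * j = d) :
    ∀ j, 1 ≤ j → j ≤ k + 1 → ∀ X : Finset (Fin n), X.card = j → ∀ x ∈ X,
      (Finset.univ.filter fun i : Fin d ⊕ Fin d =>
        ∀ y ∈ X, (Sum.elim θ (fun m => Fin.revPerm * θ m) i) x ≤
                 (Sum.elim θ (fun m => Fin.revPerm * θ m) i) y).card * j = 2 * d := by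
  rintro j hj1 hjk X rfl x hx
  -- `minCount` and the statement decide `≤` through different `Decidable` instances, which
  -- `convert` and `congr` identify
  have hsmall : ∀ Y : Finset (Fin n), x ∈ Y → #Y ≤ k →
      minCount (fun i => θ i) Y x * #Y = d := fun Y hxY hY => by
    unfold minCount
    convert hmin _ (card_pos.mpr ⟨x, hxY⟩) hY Y rfl x hxY
  have hcount : #{i | ∀ y ∈ X, (Sum.elim θ (fun m => Fin.revPerm * θ m) i) x ≤
      (Sum.elim θ (fun m => Fin.revPerm * θ m) i) y} =
      minCount (fun i => θ i) X x + maxCount (fun i => θ i) X x := by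
    calc _ = minCount (fun i => ⇑(Sum.elim θ (fun m => Fin.revPerm * θ m) i)) X x := by
          unfold minCount
          congr
      _ = minCount (fun i => θ i) X x + minCount (fun i => Fin.rev ∘ θ i) X x :=
          minCount_sum _ X x
      _ = _ := by rw [minCount_comp_strictAnti Fin.rev_strictAnti]
  have hkey := maxCount_add_neg_one_pow_mul_minCount (fun i => (θ i).injective) hx
    fun Y _ hxY hY => hsmall Y hxY (by omega)
  rw [hcount]
  rcases hjk.lt_or_eq with hlt | heq
  · have hA := hsmall X hx (by omega)
    qify at hA ⊢
    linear_combination hkey + (1 - (-1 : ℚ) ^ #X) * hA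
  · rw [heq, hodd.add_one.neg_one_pow, ← heq] at hkey
    qify
    linear_combination hkey

/-- Let `k ≥ 3` be odd and `(θ₁,…,θ_d)` a `k`-restricted minwise independent
family of permutations of `{1,…,n}` (with `k+1 ≤ n`). With `σ` the
order-reversing permutation, the `2d` permutations `θ_m` and `σ∘θ_m` form a
`(k+1)`-restricted minwise independent family. -/
theorem stmt_9 (n k d : ℕ) (hodd : Odd k) (hk3 : 3 ≤ k) (hkn : k + 1 ≤ n)
    (θ : Fin d → Equiv.Perm (Fin n))
    (hmin : ∀ j, 1 ≤ j → j ≤ k → ∀ X : Finset (Fin n), X.card = j → ∀ x ∈ X,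
      (Finset.univ.filter fun i : Fin d => ∀ y ∈ X, θ i x ≤ θ i y).card * j = d) :
    ∀ j, 1 ≤ j → j ≤ k + 1 → ∀ X : Finset (Fin n), X.card = j → ∀ x ∈ X,
      (Finset.univ.filter fun i : Fin d ⊕ Fin d =>
        ∀ y ∈ X, (Sum.elim θ (fun m => Fin.revPerm * θ m) i) x ≤
                 (Sum.elim θ (fun m => Fin.revPerm * θ m) i) y).card * j = 2 * d :=
  stmt_9_general n k d hodd θ hmin
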